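/- arXiv:1605.04297 — 7 statements merged into one kernel-verified Lean document; each statement's English description precedes it below -/
import Mathlib

section
/- If C is a sum closed permutation class, then the sequence (|C_n|) is supermultiplicative, i.e., |C_m| · |C_n| ≤ |C_{m+n}| for all m, n ≥ 1, and consequently the limit lim_{n→∞} |C_n|^{1/n} exists in [0, +∞] and equals sup_{n≥1} |C_n|^{1/n}; in particular every sum closed permutation class has a (possibly infinite) growth rate. -/
open Filter

/-- A permutation of some finite length `n`. -/
abbrev Permu : Type := Σ n : ℕ, Equiv.Perm (Fin n)

/-- `PLe σ π` : the permutation `σ` is contained in `π` as a pattern. -/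
def PLe (σ π : Permu) : Prop :=
  ∃ f : Fin σ.1 → Fin π.1, StrictMono f ∧
    ∀ i j : Fin σ.1, σ.2 i < σ.2 j ↔ π.2 (f i) < π.2 (f j)

/-- A permutation class: a set of permutations closed downward under containment. -/
def IsPermClass (C : Set Permu) : Prop :=
  ∀ σ π : Permu, PLe σ π → π ∈ C → σ ∈ C

/-- The number of permutations of length `n` in `C`. -/
noncomputable def pcount (C : Set Permu) (n : ℕ) : ℕ :=
  Set.ncard {π ∈ C | π.1 = n}

/-- The upper growth rate of a class, as an extended real. -/
noncomputable def ugr (C : Set Permu) : EReal :=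
  limsup (fun n : ℕ => (((pcount C n : ℝ) ^ ((n : ℝ)⁻¹) : ℝ) : EReal)) atTop

/-- The lower growth rate of a class, as an extended real. -/
noncomputable def lgr (C : Set Permu) : EReal :=
  liminf (fun n : ℕ => (((pcount C n : ℝ) ^ ((n : ℝ)⁻¹) : ℝ) : EReal)) atTop
/-- The direct sum of two permutations, on underlying finite types. -/
def permSum {m n : ℕ} (π : Equiv.Perm (Fin m)) (σ : Equiv.Perm (Fin n)) :
    Equiv.Perm (Fin (m + n)) :=
  finSumFinEquiv.symm.trans ((Equiv.sumCongr π σ).trans finSumFinEquiv)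

/-- The sum `π ⊕ σ` of two permutations. -/
def psum (π σ : Permu) : Permu := ⟨π.1 + σ.1, permSum π.2 σ.2⟩

/-- The skew sum of two permutations, on underlying finite types. -/
def permSkew {m n : ℕ} (π : Equiv.Perm (Fin m)) (σ : Equiv.Perm (Fin n)) :
    Equiv.Perm (Fin (m + n)) :=
  finSumFinEquiv.symm.trans ((Equiv.sumCongr π σ).trans
    (((Equiv.sumComm (Fin m) (Fin n)).trans finSumFinEquiv).trans (finCongr (Nat.add_comm n m))))

/-- The skew sum `π ⊖ σ` of two permutations. -/
def pskew (π σ : Permu) : Permu := ⟨π.1 + σ.1, permSkew π.2 σ.2⟩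

/-- A set of permutations is sum closed if it is closed under `⊕`. -/
def SumClosed (C : Set Permu) : Prop := ∀ π σ : Permu, π ∈ C → σ ∈ C → psum π σ ∈ C

/-- A set of permutations is skew closed if it is closed under `⊖`. -/
def SkewClosed (C : Set Permu) : Prop := ∀ π σ : Permu, π ∈ C → σ ∈ C → pskew π σ ∈ C

/-- A permutation is sum indecomposable if it is not the sum of two nonempty permutations. -/
def SumIndec (τ : Permu) : Prop := ¬ ∃ π σ : Permu, 0 < π.1 ∧ 0 < σ.1 ∧ τ = psum π σ

/-- A permutation is skew indecomposable if it is not the skew sum of two nonempty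
permutations. -/
def SkewIndec (τ : Permu) : Prop := ¬ ∃ π σ : Permu, 0 < π.1 ∧ 0 < σ.1 ∧ τ = pskew π σ

/-- `Sub π` : the class of all permutations contained in `π`. -/
def SubCl (π : Permu) : Set Permu := {σ | PLe σ π}

/-- The sum closure of a set of permutations: the smallest sum closed class containing it. -/
def sumClosure (C : Set Permu) : Set Permu :=
  ⋂₀ {D : Set Permu | IsPermClass D ∧ SumClosed D ∧ C ⊆ D}

/-- The skew closure of a set of permutations: the smallest skew closed class containing it. -/
def skewClosure (C : Set Permu) : Set Permu :=
  ⋂₀ {D : Set Permu | IsPermClass D ∧ SkewClosed D ∧ C ⊆ D}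

/-- The cell class `G_γ`: permutations `π` with `gr(⊕Sub(π)) < γ` or `gr(⊖Sub(π)) < γ`.
(These growth rates exist, so they coincide with the upper growth rates used here.) -/
noncomputable def cellClass (γ : ℝ) : Set Permu :=
  {π | ugr (sumClosure (SubCl π)) < (γ : EReal) ∨ ugr (skewClosure (SubCl π)) < (γ : EReal)}

/-! Placing a permutation of length `m` and one of length `n` side by side with `⊕` embeds
`C_m × C_n` injectively into `C_{m+n}`. Fekete's argument then gives the limit: for fixed `k`,
`|C_n| ≥ |C_k| ^ ⌊n/k⌋`, the remainder block contributing a factor `≥ 1` because a class with a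
nonempty member contains the permutation of length one; hence
`liminf |C_n|^{1/n} ≥ |C_k|^{1/k}`, while the limsup is at most the supremum. -/

open Topology

lemma finite_slice (C : Set Permu) (n : ℕ) : {π ∈ C | π.1 = n}.Finite :=
  (Set.finite_range fun p : Equiv.Perm (Fin n) => (⟨n, p⟩ : Permu)).subset
    fun _ ⟨_, hπ⟩ => hπ ▸ ⟨_, rfl⟩

lemma permSum_injective (m n : ℕ) :
    Function.Injective fun x : Equiv.Perm (Fin m) × Equiv.Perm (Fin n) => permSum x.1 x.2 :=
  finSumFinEquiv.permCongr.injective.comp Equiv.Perm.sumCongrHom_injective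

lemma psum_injOn_lengths (m n : ℕ) :
    Set.InjOn (fun x : Permu × Permu => psum x.1 x.2) ({π | π.1 = m} ×ˢ {σ | σ.1 = n}) := by
  rintro ⟨⟨m₁, p⟩, ⟨n₁, s⟩⟩ ⟨rfl, rfl⟩ ⟨⟨m₂, p'⟩, ⟨n₂, s'⟩⟩ ⟨hm, hn⟩ h
  obtain rfl : m₂ = m₁ := hm
  obtain rfl : n₂ = n₁ := hn
  cases @permSum_injective _ _ (p, s) (p', s') (eq_of_heq (Sigma.mk.inj_iff.1 h).2)
  rfl

theorem pcount_mul_le_pcount_add {C : Set Permu} (hsum : SumClosed C) (m n : ℕ) :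
    pcount C m * pcount C n ≤ pcount C (m + n) := by
  rw [pcount, pcount, ← Set.ncard_prod]
  refine Set.ncard_le_ncard_of_injOn (fun x : Permu × Permu => psum x.1 x.2) ?_
    ((psum_injOn_lengths m n).mono (Set.prod_mono (fun _ h => h.2) (fun _ h => h.2)))
    (finite_slice C _)
  rintro ⟨π, σ⟩ ⟨⟨hπ, rfl⟩, ⟨hσ, rfl⟩⟩
  exact ⟨hsum π σ hπ hσ, rfl⟩

lemma pLe_one_of_pos {π : Permu} (hπ : 0 < π.1) : PLe ⟨1, 1⟩ π :=
  ⟨fun _ => ⟨0, hπ⟩, Subsingleton.strictMono _, fun i j => by simp [Subsingleton.elim i j]⟩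

lemma pcount_one_pos {C : Set Permu} (hC : IsPermClass C) {n : ℕ} (hn : 1 ≤ n)
    (h : 0 < pcount C n) : 0 < pcount C 1 := by
  obtain ⟨π, hπC, rfl⟩ := Set.nonempty_of_ncard_ne_zero h.ne'
  exact (Set.ncard_pos (finite_slice C 1)).2 ⟨⟨1, 1⟩, hC _ π (pLe_one_of_pos hn) hπC, rfl⟩

theorem tendsto_biSup_of_le_liminf {α : Type*} [CompleteLinearOrder α] [TopologicalSpace α]
    [OrderTopology α] {f : ℕ → α} (h : ∀ k, 1 ≤ k → f k ≤ liminf f atTop) :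
    Tendsto f atTop (𝓝 (⨆ k ∈ Set.Ici 1, f k)) :=
  tendsto_of_le_liminf_of_limsup_le (iSup₂_le h) <| limsup_le_of_le (by isBoundedDefault) <|
    (eventually_ge_atTop 1).mono fun n hn => le_iSup₂ (f := fun k (_ : k ∈ Set.Ici 1) => f k) n hn

lemma tendsto_natCast_div_div_atTop (k : ℕ) :
    Tendsto (fun n : ℕ => ((n / k : ℕ) : ℝ) / n) atTop (𝓝 (k : ℝ)⁻¹) := by
  refine ((tendsto_nat_floor_mul_div_atTop (a := (k : ℝ)⁻¹) (by positivity)).comp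
    tendsto_natCast_atTop_atTop).congr fun n => ?_
  simp [inv_mul_eq_div, Nat.floor_div_eq_div]

noncomputable def rootSeq (a : ℕ → ℕ) (n : ℕ) : EReal := ((a n : ℝ) ^ (n : ℝ)⁻¹ : ℝ)

lemma rootSeq_le_liminf_of_eq_zero {a : ℕ → ℕ} {k : ℕ} (hk : 1 ≤ k) (h : a k = 0) :
    rootSeq a k ≤ liminf (rootSeq a) atTop := by
  have h_zero : rootSeq a k = 0 := by
    simp [rootSeq, h, Real.zero_rpow (inv_ne_zero (Nat.cast_ne_zero.2 (by omega : k ≠ 0)))]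
  rw [h_zero]
  exact le_liminf_of_le (by isBoundedDefault)
    (.of_forall fun _ => EReal.coe_nonneg.2 (by positivity))

section Supermultiplicative

variable {a : ℕ → ℕ} (h_mul : ∀ m n, 1 ≤ m → 1 ≤ n → a m * a n ≤ a (m + n)) (h_one : 0 < a 1)
include h_mul h_one

lemma one_le_of_supermul {n : ℕ} (hn : 1 ≤ n) : 1 ≤ a n := by
  induction n, hn using Nat.le_induction with
  | base => exact h_one
  | succ n hn ih => exact (one_le_mul ih h_one).trans (h_mul n 1 hn le_rfl)

lemma pow_le_of_supermul {k q : ℕ} (hk : 1 ≤ k) (hq : 1 ≤ q) (r : ℕ) :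
    a k ^ q ≤ a (k * q + r) := by
  induction q, hq using Nat.le_induction with
  | base =>
    rcases r.eq_zero_or_pos with rfl | hr
    · simp
    · simpa using Nat.le_mul_of_pos_right _ (one_le_of_supermul h_mul h_one hr) |>.trans
        (h_mul k r hk hr)
  | succ q hq ih =>
    calc a k ^ (q + 1) = a k ^ q * a k := pow_succ _ _
      _ ≤ a (k * q + r) * a k := Nat.mul_le_mul_right _ ih
      _ ≤ a (k * q + r + k) := h_mul _ _ (le_add_right (one_le_mul hk hq)) hk
      _ = a (k * (q + 1) + r) := by ring_nf

lemma pow_div_le_of_supermul {k n : ℕ} (hk : 1 ≤ k) (hkn : k ≤ n) : a k ^ (n / k) ≤ a n := by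
  simpa only [Nat.div_add_mod] using
    pow_le_of_supermul h_mul h_one hk (Nat.div_pos hkn hk) (n % k)

lemma rootSeq_le_liminf_of_supermul {k : ℕ} (hk : 1 ≤ k) :
    rootSeq a k ≤ liminf (rootSeq a) atTop := by
  set c : ℝ := (a k : ℝ)
  have hc : 0 < c := Nat.cast_pos.2 (one_le_of_supermul h_mul h_one hk)
  have h_lim : Tendsto (fun n : ℕ => c ^ (((n / k : ℕ) : ℝ) / n)) atTop (𝓝 (c ^ (k : ℝ)⁻¹)) :=
    tendsto_const_nhds.rpow (tendsto_natCast_div_div_atTop k) (.inl hc.ne')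
  have h_le : ∀ᶠ n in atTop, ((c ^ (((n / k : ℕ) : ℝ) / n) : ℝ) : EReal) ≤ rootSeq a n := by
    filter_upwards [eventually_ge_atTop k] with n hkn
    rw [div_eq_mul_inv, Real.rpow_mul hc.le, Real.rpow_natCast]
    exact EReal.coe_le_coe_iff.2 <| Real.rpow_le_rpow (by positivity)
      (by simp only [c]; exact_mod_cast pow_div_le_of_supermul h_mul h_one hk hkn) (by positivity)
  calc rootSeq a k = liminf (fun n : ℕ => ((c ^ (((n / k : ℕ) : ℝ) / n) : ℝ) : EReal)) atTop :=
        (EReal.tendsto_coe.2 h_lim).liminf_eq.symm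
    _ ≤ liminf (rootSeq a) atTop := liminf_le_liminf h_le

end Supermultiplicative

/-- For a sum closed class `C`, the sequence `(|C_n|)` is
supermultiplicative, and consequently the sequence of `n`-th roots converges in `[0,∞]`
to its supremum over `n ≥ 1`; in particular every sum closed class has a (possibly
infinite) growth rate. -/
theorem sum_closed_supermultiplicative_growth_rate
    (C : Set Permu) (hC : IsPermClass C) (hsum : SumClosed C) :
    (∀ m n : ℕ, 1 ≤ m → 1 ≤ n → pcount C m * pcount C n ≤ pcount C (m + n)) ∧
    Tendsto (fun n : ℕ => (((pcount C n : ℝ) ^ ((n : ℝ)⁻¹) : ℝ) : EReal)) atTop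
      (nhds (⨆ n ∈ Set.Ici (1 : ℕ), (((pcount C n : ℝ) ^ ((n : ℝ)⁻¹) : ℝ) : EReal))) := by
  have h_mul : ∀ m n : ℕ, 1 ≤ m → 1 ≤ n → pcount C m * pcount C n ≤ pcount C (m + n) :=
    fun m n _ _ => pcount_mul_le_pcount_add hsum m n
  refine ⟨h_mul, tendsto_biSup_of_le_liminf (f := rootSeq (pcount C)) fun k hk => ?_⟩
  rcases (pcount C k).eq_zero_or_pos with h | h
  · exact rootSeq_le_liminf_of_eq_zero hk h
  · exact rootSeq_le_liminf_of_supermul h_mul (pcount_one_pos hC hk h) hk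
end

section
/- If a permutation class contains alternations of every length, then it contains parallel alternations of every length or it contains wedge alternations of every length. -/
open Filter

/-- The group-theoretic inverse of a permutation. -/
def pinv (π : Permu) : Permu := ⟨π.1, π.2⁻¹⟩

/-- A vertical alternation: every entry of odd (1-based) index lies above every entry of
even index, or vice versa. -/
def VertAlt (π : Permu) : Prop :=
  (∀ x y : Fin π.1, Odd ((x : ℕ) + 1) → Even ((y : ℕ) + 1) → π.2 y < π.2 x) ∨
  (∀ x y : Fin π.1, Odd ((x : ℕ) + 1) → Even ((y : ℕ) + 1) → π.2 x < π.2 y)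

/-- The subsequence of entries in odd (1-based) positions is increasing. -/
def OddIncr (π : Permu) : Prop :=
  ∀ x y : Fin π.1, Odd ((x : ℕ) + 1) → Odd ((y : ℕ) + 1) → x < y → π.2 x < π.2 y

/-- The subsequence of entries in odd (1-based) positions is decreasing. -/
def OddDecr (π : Permu) : Prop :=
  ∀ x y : Fin π.1, Odd ((x : ℕ) + 1) → Odd ((y : ℕ) + 1) → x < y → π.2 y < π.2 x

/-- The subsequence of entries in even (1-based) positions is increasing. -/
def EvenIncr (π : Permu) : Prop :=
  ∀ x y : Fin π.1, Even ((x : ℕ) + 1) → Even ((y : ℕ) + 1) → x < y → π.2 x < π.2 y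

/-- The subsequence of entries in even (1-based) positions is decreasing. -/
def EvenDecr (π : Permu) : Prop :=
  ∀ x y : Fin π.1, Even ((x : ℕ) + 1) → Even ((y : ℕ) + 1) → x < y → π.2 y < π.2 x

/-- An alternation: a vertical alternation or a horizontal alternation (a permutation
whose inverse is a vertical alternation). -/
def IsAlternation (π : Permu) : Prop := VertAlt π ∨ VertAlt (pinv π)

/-- A vertical parallel alternation: the odd-position and even-position subsequences are
both increasing or both decreasing. -/
def VertParallel (π : Permu) : Prop :=
  VertAlt π ∧ ((OddIncr π ∧ EvenIncr π) ∨ (OddDecr π ∧ EvenDecr π))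

/-- A vertical wedge alternation: one of the two subsequences is increasing and the
other is decreasing. -/
def VertWedge (π : Permu) : Prop :=
  VertAlt π ∧ ((OddIncr π ∧ EvenDecr π) ∨ (OddDecr π ∧ EvenIncr π))

/-- A parallel alternation (vertical or horizontal). -/
def IsParallelAlt (π : Permu) : Prop := VertParallel π ∨ VertParallel (pinv π)

/-- A wedge alternation (vertical or horizontal). -/
def IsWedgeAlt (π : Permu) : Prop := VertWedge π ∨ VertWedge (pinv π)

/-! Split a vertical alternation of length `2m` into the subsequences of its entries in odd and in
even positions. Erdős–Szekeres, applied to the first and then to the second along the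
subsequence found, gives indices `t₀ < ⋯ < t_k` at which both are monotone; the entries at the
positions `2tᵢ, 2tᵢ + 1` then form a parallel or a wedge alternation of length `2(k + 1)` in the
class. Horizontal alternations are handled through inverses. Both kinds of alternation are closed
under taking prefixes, so if parallel ones were missing at length `n` and wedge ones at length
`p`, the case `k = n + p` would give a contradiction. -/

open Function

/-- `Tuple.sort` sorts the values of `π.2 ∘ f`, so its inverse ranks them. -/
def pattern (π : Permu) {k : ℕ} (f : Fin k → Fin π.1) : Permu :=
  ⟨k, (Tuple.sort (π.2 ∘ f))⁻¹⟩

lemma pattern_lt_pattern_iff (π : Permu) {k : ℕ} {f : Fin k → Fin π.1} (hf : Injective f)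
    {i j : Fin k} : (pattern π f).2 i < (pattern π f).2 j ↔ π.2 (f i) < π.2 (f j) := by
  set v := π.2 ∘ f
  have hsorted : StrictMono (v ∘ Tuple.sort v) :=
    (Tuple.monotone_sort v).strictMono_of_injective
      ((π.2.injective.comp hf).comp (Tuple.sort v).injective)
  have hv (a : Fin k) : v a = (v ∘ Tuple.sort v) ((Tuple.sort v)⁻¹ a) := by simp
  change (Tuple.sort v)⁻¹ i < (Tuple.sort v)⁻¹ j ↔ v i < v j
  rw [hv i, hv j, hsorted.lt_iff_lt]

lemma pLe_pattern (π : Permu) {k : ℕ} {f : Fin k → Fin π.1} (hf : StrictMono f) :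
    PLe (pattern π f) π :=
  ⟨f, hf, fun _ _ => pattern_lt_pattern_iff π hf.injective⟩

lemma pinv_pinv (π : Permu) : pinv (pinv π) = π :=
  congrArg (Sigma.mk π.1) (inv_inv π.2)

lemma PLe.pinv {σ π : Permu} (h : PLe σ π) : PLe (pinv σ) (pinv π) := by
  obtain ⟨k, σ⟩ := σ
  obtain ⟨n, π⟩ := π
  obtain ⟨f, hf, hord⟩ := h
  dsimp only [_root_.pinv] at hord ⊢
  refine ⟨fun i => π (f (σ⁻¹ i)), fun i j hij => (hord _ _).1 (by simpa using hij), fun i j => ?_⟩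
  simp [hf.lt_iff_lt]

lemma IsPermClass.pinv_mem {C : Set Permu} (hC : IsPermClass C) {σ π : Permu}
    (h : PLe σ (pinv π)) (hπ : π ∈ C) : pinv σ ∈ C :=
  hC _ _ (by simpa only [pinv_pinv] using h.pinv) hπ

def PreservesParity {k n : ℕ} (f : Fin k → Fin n) : Prop :=
  ∀ x, (f x : ℕ) % 2 = (x : ℕ) % 2

section PreservesParity

variable {π : Permu} {k : ℕ} {f : Fin k → Fin π.1}

lemma odd_val_add_one_iff (hpar : PreservesParity f) (x : Fin k) :
    Odd ((f x : ℕ) + 1) ↔ Odd ((x : ℕ) + 1) := by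
  have := hpar x
  simp only [Nat.odd_iff]; omega

lemma even_val_add_one_iff (hpar : PreservesParity f) (x : Fin k) :
    Even ((f x : ℕ) + 1) ↔ Even ((x : ℕ) + 1) := by
  have := hpar x
  simp only [Nat.even_iff]; omega

lemma VertAlt.pattern (h : VertAlt π) (hf : Injective f)
    (hpar : PreservesParity f) : VertAlt (pattern π f) := by
  refine h.imp (fun h x y hx hy => ?_) (fun h x y hx hy => ?_) <;>
    exact (pattern_lt_pattern_iff π hf).2 (h _ _ ((odd_val_add_one_iff hpar x).2 hx)
      ((even_val_add_one_iff hpar y).2 hy))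

lemma OddIncr.pattern (h : OddIncr π) (hf : StrictMono f)
    (hpar : PreservesParity f) : OddIncr (pattern π f) := fun x y hx hy hxy =>
  (pattern_lt_pattern_iff π hf.injective).2 <|
    h _ _ ((odd_val_add_one_iff hpar x).2 hx) ((odd_val_add_one_iff hpar y).2 hy) (hf hxy)

lemma OddDecr.pattern (h : OddDecr π) (hf : StrictMono f)
    (hpar : PreservesParity f) : OddDecr (pattern π f) := fun x y hx hy hxy =>
  (pattern_lt_pattern_iff π hf.injective).2 <|
    h _ _ ((odd_val_add_one_iff hpar x).2 hx) ((odd_val_add_one_iff hpar y).2 hy) (hf hxy)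

lemma EvenIncr.pattern (h : EvenIncr π) (hf : StrictMono f)
    (hpar : PreservesParity f) : EvenIncr (pattern π f) := fun x y hx hy hxy =>
  (pattern_lt_pattern_iff π hf.injective).2 <|
    h _ _ ((even_val_add_one_iff hpar x).2 hx) ((even_val_add_one_iff hpar y).2 hy) (hf hxy)

lemma EvenDecr.pattern (h : EvenDecr π) (hf : StrictMono f)
    (hpar : PreservesParity f) : EvenDecr (pattern π f) := fun x y hx hy hxy =>
  (pattern_lt_pattern_iff π hf.injective).2 <|
    h _ _ ((even_val_add_one_iff hpar x).2 hx) ((even_val_add_one_iff hpar y).2 hy) (hf hxy)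

lemma VertParallel.pattern (h : VertParallel π) (hf : StrictMono f)
    (hpar : PreservesParity f) : VertParallel (pattern π f) := by
  obtain ⟨halt, ⟨ho, he⟩ | ⟨ho, he⟩⟩ := h
  · exact ⟨halt.pattern hf.injective hpar, .inl ⟨ho.pattern hf hpar, he.pattern hf hpar⟩⟩
  · exact ⟨halt.pattern hf.injective hpar, .inr ⟨ho.pattern hf hpar, he.pattern hf hpar⟩⟩

lemma VertWedge.pattern (h : VertWedge π) (hf : StrictMono f)
    (hpar : PreservesParity f) : VertWedge (pattern π f) := by
  obtain ⟨halt, ⟨ho, he⟩ | ⟨ho, he⟩⟩ := h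
  · exact ⟨halt.pattern hf.injective hpar, .inl ⟨ho.pattern hf hpar, he.pattern hf hpar⟩⟩
  · exact ⟨halt.pattern hf.injective hpar, .inr ⟨ho.pattern hf hpar, he.pattern hf hpar⟩⟩

end PreservesParity

lemma IsPermClass.exists_length_eq_of_le {C : Set Permu} (hC : IsPermClass C) {P : Permu → Prop}
    (hP : ∀ σ : Permu, ∀ n (h : n ≤ σ.1), P σ → P (pattern σ (Fin.castLE h)))
    {π : Permu} (hπ : π ∈ C) (hPπ : P π ∨ P (pinv π)) {n : ℕ} (hn : n ≤ π.1) :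
    ∃ τ ∈ C, τ.1 = n ∧ (P τ ∨ P (pinv τ)) := by
  rcases hPπ with hPπ | hPπ
  · exact ⟨_, hC _ _ (pLe_pattern π (Fin.strictMono_castLE hn)) hπ, rfl, .inl (hP π n hn hPπ)⟩
  · refine ⟨pinv (pattern (pinv π) (Fin.castLE hn)),
      hC.pinv_mem (pLe_pattern _ (Fin.strictMono_castLE hn)) hπ, rfl, .inr ?_⟩
    rw [pinv_pinv]
    exact hP (pinv π) n hn hPπ

lemma IsPermClass.exists_isParallelAlt_of_le {C : Set Permu} (hC : IsPermClass C) {π : Permu}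
    (hπ : π ∈ C) (hP : IsParallelAlt π) {n : ℕ} (hn : n ≤ π.1) :
    ∃ τ ∈ C, τ.1 = n ∧ IsParallelAlt τ :=
  hC.exists_length_eq_of_le (fun _ _ h hσ => hσ.pattern (Fin.strictMono_castLE h) fun _ => rfl)
    hπ hP hn

lemma IsPermClass.exists_isWedgeAlt_of_le {C : Set Permu} (hC : IsPermClass C) {π : Permu}
    (hπ : π ∈ C) (hW : IsWedgeAlt π) {n : ℕ} (hn : n ≤ π.1) :
    ∃ τ ∈ C, τ.1 = n ∧ IsWedgeAlt τ :=
  hC.exists_length_eq_of_le (fun _ _ h hσ => hσ.pattern (Fin.strictMono_castLE h) fun _ => rfl)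
    hπ hW hn

section ErdosSzekeres

variable {α : Type*} [LinearOrder α] {m : ℕ}

open Classical in
noncomputable def maxIncrLen (u : Fin m → α) (i : Fin m) : ℕ :=
  (Finset.univ.filter fun s : Finset (Fin m) =>
    IsGreatest (s : Set (Fin m)) i ∧ StrictMonoOn u s).sup Finset.card

lemma card_le_maxIncrLen {u : Fin m → α} {i : Fin m} {s : Finset (Fin m)}
    (hi : IsGreatest (s : Set (Fin m)) i) (hu : StrictMonoOn u s) : s.card ≤ maxIncrLen u i := by
  classical
  exact Finset.le_sup (f := Finset.card) (by simp [hi, hu])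

lemma exists_card_eq_maxIncrLen (u : Fin m → α) (i : Fin m) :
    ∃ s : Finset (Fin m), IsGreatest (s : Set (Fin m)) i ∧ StrictMonoOn u s ∧
      s.card = maxIncrLen u i := by
  classical
  obtain ⟨s, hs, hcard⟩ := Finset.exists_mem_eq_sup
    (Finset.univ.filter fun s : Finset (Fin m) =>
      IsGreatest (s : Set (Fin m)) i ∧ StrictMonoOn u s)
    ⟨{i}, by simp [Set.subsingleton_singleton.strictMonoOn]⟩ Finset.card
  simp only [Finset.mem_filter, Finset.mem_univ, true_and] at hs
  exact ⟨s, hs.1, hs.2, hcard.symm.trans (by unfold maxIncrLen; congr)⟩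

lemma one_le_maxIncrLen (u : Fin m → α) (i : Fin m) : 1 ≤ maxIncrLen u i :=
  card_le_maxIncrLen (s := {i}) (by simp) (by simp [Set.subsingleton_singleton.strictMonoOn])

/-- Appending `u j` to a longest increasing subsequence ending at `i`. -/
lemma maxIncrLen_lt_maxIncrLen {u : Fin m → α} {i j : Fin m} (hij : i < j) (hu : u i < u j) :
    maxIncrLen u i < maxIncrLen u j := by
  classical
  obtain ⟨s, ⟨his, hs_le⟩, hmono, hcard⟩ := exists_card_eq_maxIncrLen u i
  have hjs : j ∉ s := fun hj => (hs_le hj).not_gt hij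
  have hgreatest : IsGreatest ((insert j s : Finset (Fin m)) : Set (Fin m)) j := by
    refine ⟨by simp, ?_⟩
    simp only [Finset.coe_insert, upperBounds_insert, Set.mem_inter_iff, Set.mem_Ici, le_refl,
      true_and]
    exact fun a ha => (hs_le ha).trans hij.le
  have hmono' : StrictMonoOn u (insert j s : Finset (Fin m)) := by
    have hlt : ∀ a ∈ s, u a < u j := fun a ha =>
      (hs_le ha).lt_or_eq.elim (fun h => (hmono ha his h).trans hu) (fun h => h ▸ hu)
    rintro a ha b hb hab
    simp only [Finset.coe_insert, Set.mem_insert_iff, Finset.mem_coe] at ha hb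
    rcases ha with rfl | ha <;> rcases hb with rfl | hb
    · exact absurd hab (lt_irrefl _)
    · exact absurd ((hs_le hb).trans_lt hij) hab.not_gt
    · exact hlt a ha
    · exact hmono ha hb hab
  have := card_le_maxIncrLen hgreatest hmono'
  rw [Finset.card_insert_of_notMem hjs, hcard] at this
  omega

lemma exists_strictMono_of_le_maxIncrLen {u : Fin m → α} {i : Fin m} {k : ℕ}
    (hk : k ≤ maxIncrLen u i) : ∃ g : Fin k → Fin m, StrictMono g ∧ StrictMono (u ∘ g) := by
  obtain ⟨s, -, hmono, hcard⟩ := exists_card_eq_maxIncrLen u i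
  let g : Fin k → Fin m := s.orderEmbOfFin rfl ∘ Fin.castLE (hcard ▸ hk)
  have hg : StrictMono g := (s.orderEmbOfFin rfl).strictMono.comp (Fin.strictMono_castLE _)
  refine ⟨g, hg, fun a b hab => hmono ?_ ?_ (hg hab)⟩ <;> exact s.orderEmbOfFin_mem rfl _

/-- **Erdős–Szekeres**: label each index by the lengths of the longest increasing and
decreasing subsequences ending there; these labels are pairwise distinct. -/
theorem exists_strictMono_or_strictAnti_comp {u : Fin m → α} (hu : Injective u) {r s : ℕ}
    (hm : r * s < m) :
    (∃ g : Fin (r + 1) → Fin m, StrictMono g ∧ StrictMono (u ∘ g)) ∨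
      ∃ g : Fin (s + 1) → Fin m, StrictMono g ∧ StrictAnti (u ∘ g) := by
  by_contra! ⟨hinc, hdec⟩
  let v : Fin m → αᵒᵈ := OrderDual.toDual ∘ u
  have hinc' (i : Fin m) : maxIncrLen u i ≤ r := by
    by_contra! h
    obtain ⟨g, hg, hug⟩ := exists_strictMono_of_le_maxIncrLen h
    exact hinc g hg hug
  have hdec' (i : Fin m) : maxIncrLen v i ≤ s := by
    by_contra! h
    obtain ⟨g, hg, hvg⟩ := exists_strictMono_of_le_maxIncrLen h
    exact hdec g hg (strictMono_toDual_comp_iff.1 hvg)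
  have hlabel_ne {i j : Fin m} (hij : i < j) :
      (maxIncrLen u i, maxIncrLen v i) ≠ (maxIncrLen u j, maxIncrLen v j) := by
    rcases (hu.ne hij.ne).lt_or_gt with h | h
    · exact fun he => (maxIncrLen_lt_maxIncrLen hij h).ne (congrArg Prod.fst he)
    · exact fun he => (maxIncrLen_lt_maxIncrLen (u := v) hij h).ne (congrArg Prod.snd he)
  obtain ⟨i, -, j, -, hne, heq⟩ := Finset.exists_ne_map_eq_of_card_lt_of_maps_to
    (s := Finset.univ) (t := Finset.Icc 1 r ×ˢ Finset.Icc 1 s)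
    (f := fun i => (maxIncrLen u i, maxIncrLen v i)) (by simpa using hm)
    (fun i _ => by simp [one_le_maxIncrLen, hinc' i, hdec' i])
  rcases hne.lt_or_gt with h | h
  · exact hlabel_ne h heq
  · exact hlabel_ne h heq.symm

theorem exists_strictMono_comp_or_strictAnti_comp {u : Fin m → α} (hu : Injective u) {k : ℕ}
    (hm : k * k < m) :
    ∃ g : Fin (k + 1) → Fin m, StrictMono g ∧ (StrictMono (u ∘ g) ∨ StrictAnti (u ∘ g)) := by
  rcases exists_strictMono_or_strictAnti_comp hu hm with ⟨g, hg, hug⟩ | ⟨g, hg, hug⟩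
  · exact ⟨g, hg, .inl hug⟩
  · exact ⟨g, hg, .inr hug⟩

theorem exists_strictMono_comp_pair {u v : Fin m → α} (hu : Injective u) (hv : Injective v)
    {k : ℕ} (hm : k * k * (k * k) < m) :
    ∃ g : Fin (k + 1) → Fin m, StrictMono g ∧
      (StrictMono (u ∘ g) ∨ StrictAnti (u ∘ g)) ∧ (StrictMono (v ∘ g) ∨ StrictAnti (v ∘ g)) := by
  obtain ⟨g₁, hg₁, hug₁⟩ := exists_strictMono_comp_or_strictAnti_comp hu hm
  obtain ⟨g₂, hg₂, hvg₂⟩ :=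
    exists_strictMono_comp_or_strictAnti_comp (hv.comp hg₁.injective) (Nat.lt_succ_self (k * k))
  refine ⟨g₁ ∘ g₂, hg₁.comp hg₂, ?_, hvg₂⟩
  exact hug₁.imp (fun h => h.comp hg₂) (fun h => h.comp_strictMono hg₂)

end ErdosSzekeres

section Interleave

variable {m k : ℕ}

/-- `oddPos m t = 2t` and `evenPos m t = 2t + 1` are 0-based: they are the odd and the even
positions in the 1-based convention of `OddIncr` and `EvenIncr`. -/
def oddPos (m : ℕ) (t : Fin m) : Fin (2 * m) := ⟨2 * t, by omega⟩

def evenPos (m : ℕ) (t : Fin m) : Fin (2 * m) := ⟨2 * t + 1, by omega⟩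

lemma oddPos_strictMono (m : ℕ) : StrictMono (oddPos m) := fun a b h => by
  simp only [oddPos, Fin.lt_def] at h ⊢; omega

lemma evenPos_strictMono (m : ℕ) : StrictMono (evenPos m) := fun a b h => by
  simp only [evenPos, Fin.lt_def] at h ⊢; omega

lemma exists_oddPos_eq {x : Fin (2 * m)} (hx : Odd ((x : ℕ) + 1)) : ∃ t, oddPos m t = x := by
  rw [Nat.odd_iff] at hx
  exact ⟨⟨x / 2, by omega⟩, Fin.ext (by simp only [oddPos]; omega)⟩

lemma exists_evenPos_eq {x : Fin (2 * m)} (hx : Even ((x : ℕ) + 1)) : ∃ t, evenPos m t = x := by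
  rw [Nat.even_iff] at hx
  exact ⟨⟨x / 2, by omega⟩, Fin.ext (by simp only [evenPos]; omega)⟩

lemma oddIncr_of_strictMono {σ : Equiv.Perm (Fin (2 * m))} (h : StrictMono (σ ∘ oddPos m)) :
    OddIncr ⟨2 * m, σ⟩ := by
  intro x y hx hy hxy
  obtain ⟨t, rfl⟩ := exists_oddPos_eq hx
  obtain ⟨s, rfl⟩ := exists_oddPos_eq hy
  exact h ((oddPos_strictMono m).lt_iff_lt.1 hxy)

lemma oddDecr_of_strictAnti {σ : Equiv.Perm (Fin (2 * m))} (h : StrictAnti (σ ∘ oddPos m)) :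
    OddDecr ⟨2 * m, σ⟩ := by
  intro x y hx hy hxy
  obtain ⟨t, rfl⟩ := exists_oddPos_eq hx
  obtain ⟨s, rfl⟩ := exists_oddPos_eq hy
  exact h ((oddPos_strictMono m).lt_iff_lt.1 hxy)

lemma evenIncr_of_strictMono {σ : Equiv.Perm (Fin (2 * m))} (h : StrictMono (σ ∘ evenPos m)) :
    EvenIncr ⟨2 * m, σ⟩ := by
  intro x y hx hy hxy
  obtain ⟨t, rfl⟩ := exists_evenPos_eq hx
  obtain ⟨s, rfl⟩ := exists_evenPos_eq hy
  exact h ((evenPos_strictMono m).lt_iff_lt.1 hxy)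

lemma evenDecr_of_strictAnti {σ : Equiv.Perm (Fin (2 * m))} (h : StrictAnti (σ ∘ evenPos m)) :
    EvenDecr ⟨2 * m, σ⟩ := by
  intro x y hx hy hxy
  obtain ⟨t, rfl⟩ := exists_evenPos_eq hx
  obtain ⟨s, rfl⟩ := exists_evenPos_eq hy
  exact h ((evenPos_strictMono m).lt_iff_lt.1 hxy)

/-- Sends the pair of positions `2t, 2t + 1` to the pair `2 (i t), 2 (i t) + 1`. -/
def interleave (i : Fin k → Fin m) (x : Fin (2 * k)) : Fin (2 * m) :=
  ⟨2 * i ⟨x / 2, by omega⟩ + x % 2, by omega⟩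

lemma interleave_strictMono {i : Fin k → Fin m} (hi : StrictMono i) :
    StrictMono (interleave i) := by
  intro x y hxy
  rw [Fin.lt_def] at hxy
  simp only [interleave, Fin.mk_lt_mk]
  rcases (Nat.div_le_div_right (c := 2) hxy.le).lt_or_eq with h | h
  · have := Fin.lt_def.1 (hi (a := ⟨x / 2, by omega⟩) (b := ⟨y / 2, by omega⟩) h)
    omega
  · simp only [h]
    omega

lemma preservesParity_interleave (i : Fin k → Fin m) : PreservesParity (interleave i) := by
  intro x
  simp only [interleave]; omega

lemma interleave_oddPos (i : Fin k → Fin m) (t : Fin k) :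
    interleave i (oddPos k t) = oddPos m (i t) := by
  simp [interleave, oddPos]

lemma interleave_evenPos (i : Fin k → Fin m) (t : Fin k) :
    interleave i (evenPos k t) = evenPos m (i t) := by
  simp [interleave, evenPos, Nat.mul_add_div]

end Interleave

lemma strictMono_or_strictAnti_of_lt_iff {β γ δ : Type*} [Preorder β] [Preorder γ] [Preorder δ]
    {u : β → γ} {v : β → δ} (h : ∀ a b, u a < u b ↔ v a < v b)
    (hv : StrictMono v ∨ StrictAnti v) : StrictMono u ∨ StrictAnti u :=
  hv.imp (fun hv _ _ hab => (h _ _).2 (hv hab)) (fun hv _ _ hab => (h _ _).2 (hv hab))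

theorem exists_pLe_vertParallel_or_vertWedge_of_vertAlt {m : ℕ} {e : Equiv.Perm (Fin (2 * m))}
    (he : VertAlt ⟨2 * m, e⟩) {k : ℕ} (hm : k * k * (k * k) < m) :
    ∃ τ : Permu, PLe τ ⟨2 * m, e⟩ ∧ τ.1 = 2 * (k + 1) ∧ (VertParallel τ ∨ VertWedge τ) := by
  obtain ⟨g, hg, hodd, heven⟩ := exists_strictMono_comp_pair
    (e.injective.comp (oddPos_strictMono m).injective)
    (e.injective.comp (evenPos_strictMono m).injective) hm
  have hf := interleave_strictMono hg
  set τ := pattern ⟨2 * m, e⟩ (interleave g)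
  have hτ_odd : StrictMono (τ.2 ∘ oddPos (k + 1)) ∨ StrictAnti (τ.2 ∘ oddPos (k + 1)) :=
    strictMono_or_strictAnti_of_lt_iff (fun a b =>
      (pattern_lt_pattern_iff (⟨2 * m, e⟩ : Permu) (f := interleave g) hf.injective).trans
        (by rw [interleave_oddPos, interleave_oddPos]; rfl)) hodd
  have hτ_even : StrictMono (τ.2 ∘ evenPos (k + 1)) ∨ StrictAnti (τ.2 ∘ evenPos (k + 1)) :=
    strictMono_or_strictAnti_of_lt_iff (fun a b =>
      (pattern_lt_pattern_iff (⟨2 * m, e⟩ : Permu) (f := interleave g) hf.injective).trans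
        (by rw [interleave_evenPos, interleave_evenPos]; rfl)) heven
  have halt : VertAlt τ := he.pattern hf.injective (preservesParity_interleave g)
  refine ⟨τ, pLe_pattern _ hf, rfl, ?_⟩
  rcases hτ_odd with ho | ho <;> rcases hτ_even with hε | hε
  · exact .inl ⟨halt, .inl ⟨oddIncr_of_strictMono ho, evenIncr_of_strictMono hε⟩⟩
  · exact .inr ⟨halt, .inl ⟨oddIncr_of_strictMono ho, evenDecr_of_strictAnti hε⟩⟩
  · exact .inr ⟨halt, .inr ⟨oddDecr_of_strictAnti ho, evenIncr_of_strictMono hε⟩⟩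
  · exact .inl ⟨halt, .inr ⟨oddDecr_of_strictAnti ho, evenDecr_of_strictAnti hε⟩⟩

lemma IsPermClass.exists_isParallelAlt_or_isWedgeAlt {C : Set Permu} (hC : IsPermClass C)
    (h : ∀ n : ℕ, ∃ π ∈ C, π.1 = n ∧ IsAlternation π) (k : ℕ) :
    ∃ τ ∈ C, τ.1 = 2 * (k + 1) ∧ (IsParallelAlt τ ∨ IsWedgeAlt τ) := by
  obtain ⟨⟨_, e⟩, he, rfl, halt⟩ := h (2 * (k * k * (k * k) + 1))
  rcases halt with halt | halt
  · obtain ⟨τ, hle, hlen, hτ⟩ :=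
      exists_pLe_vertParallel_or_vertWedge_of_vertAlt halt (Nat.lt_succ_self _)
    exact ⟨τ, hC _ _ hle he, hlen, hτ.imp .inl .inl⟩
  · obtain ⟨τ, hle, hlen, hτ⟩ :=
      exists_pLe_vertParallel_or_vertWedge_of_vertAlt (e := e⁻¹) halt (Nat.lt_succ_self _)
    refine ⟨pinv τ, hC.pinv_mem (π := ⟨_, e⟩) hle he, hlen, ?_⟩
    rw [← pinv_pinv τ] at hτ
    exact hτ.imp .inr .inr

/-- If a permutation class contains alternations of every length, then
it contains parallel alternations of every length or wedge alternations of every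
length. -/
theorem alternations_give_parallel_or_wedge
    (C : Set Permu) (hC : IsPermClass C)
    (h : ∀ n : ℕ, ∃ π ∈ C, π.1 = n ∧ IsAlternation π) :
    (∀ n : ℕ, ∃ π ∈ C, π.1 = n ∧ IsParallelAlt π) ∨
    (∀ n : ℕ, ∃ π ∈ C, π.1 = n ∧ IsWedgeAlt π) := by
  by_contra! ⟨⟨n, hn⟩, p, hp⟩
  obtain ⟨τ, hτC, hτlen, hτ | hτ⟩ := hC.exists_isParallelAlt_or_isWedgeAlt h (n + p)
  · obtain ⟨σ, hσC, hσlen, hσ⟩ := hC.exists_isParallelAlt_of_le hτC hτ (n := n) (by omega)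
    exact hn σ hσC hσlen hσ
  · obtain ⟨σ, hσC, hσlen, hσ⟩ := hC.exists_isWedgeAlt_of_le hτC hτ (n := p) (by omega)
    exact hp σ hσC hσlen hσ
end

section
/- A well quasi-ordered permutation class contains only countably many subclasses: if C is a permutation class with no infinite antichain under containment, then the set of permutation classes D with D ⊆ C is countable. -/
open Filter

/-- A set of permutations is well quasi-ordered if it contains no infinite antichain
under the containment order. -/
def Wqo (S : Set Permu) : Prop :=
  ¬ ∃ f : ℕ → Permu, (∀ n, f n ∈ S) ∧ ∀ i j : ℕ, i ≠ j → ¬ PLe (f i) (f j)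
section Aux

lemma ple_refl (σ : Permu) : PLe σ σ :=
  ⟨id, strictMono_id, fun _ _ => Iff.rfl⟩

lemma ple_trans {σ τ ρ : Permu} (h1 : PLe σ τ) (h2 : PLe τ ρ) : PLe σ ρ := by
  obtain ⟨f, hf, hf'⟩ := h1
  obtain ⟨g, hg, hg'⟩ := h2
  exact ⟨g ∘ f, hg.comp hf, fun i j => (hf' i j).trans (hg' (f i) (f j))⟩

lemma ple_len {σ τ : Permu} (h : PLe σ τ) : σ.1 ≤ τ.1 := by
  obtain ⟨f, hf, _⟩ := h
  simpa using Fintype.card_le_of_injective f hf.injective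

lemma strictMono_fin_id {n : ℕ} {f : Fin n → Fin n} (hf : StrictMono f) : f = id := by
  have hbij : Function.Bijective f := (Finite.injective_iff_bijective).1 hf.injective
  have hr : Set.range f = Set.range (id : Fin n → Fin n) := by
    rw [Set.range_id, Set.range_eq_univ.2 hbij.2]
  exact @StrictMono.range_inj (Fin n) (Fin n) _ _ Finite.to_wellFoundedLT f id hf strictMono_id |>.1 hr

lemma ple_eq_of_len_eq {σ τ : Permu} (h : PLe σ τ) (hlen : σ.1 = τ.1) : σ = τ := by
  obtain ⟨m, s⟩ := σ
  obtain ⟨n, t⟩ := τ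
  dsimp at hlen
  subst hlen
  obtain ⟨f, hf, hiff⟩ := h
  have hfid : f = id := strictMono_fin_id hf
  subst hfid
  simp only [id] at hiff
  -- s and t have the same relative order, hence equal
  have : (t.toFun ∘ s.invFun : Fin m → Fin m) = id := by
    apply strictMono_fin_id
    intro u v huv
    exact (hiff (s.symm u) (s.symm v)).1 (by simpa using huv)
  congr 1
  apply Equiv.ext
  intro i
  have := congrFun this (s i)
  simpa using this.symm

lemma ple_antisymm {σ τ : Permu} (h1 : PLe σ τ) (h2 : PLe τ σ) : σ = τ :=
  ple_eq_of_len_eq h1 (le_antisymm (ple_len h1) (ple_len h2))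

lemma exists_min (U : Set Permu) (σ : Permu) (hσ : σ ∈ U) :
    ∃ τ, τ ∈ U ∧ PLe τ σ ∧ ∀ ρ ∈ U, PLe ρ τ → ρ = τ := by
  obtain ⟨n, hn⟩ : ∃ n, σ.1 = n := ⟨σ.1, rfl⟩
  induction n using Nat.strong_induction_on generalizing σ with
  | _ n IH =>
    by_cases hmin : ∀ ρ ∈ U, PLe ρ σ → ρ = σ
    · exact ⟨σ, hσ, ple_refl σ, hmin⟩
    · push_neg at hmin
      obtain ⟨ρ, hρU, hρle, hρne⟩ := hmin
      have hlt : ρ.1 < n := by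
        rcases (ple_len hρle).lt_or_eq with h | h
        · omega
        · exact absurd (ple_eq_of_len_eq hρle h) hρne
      obtain ⟨τ, h1, h2, h3⟩ := IH ρ.1 hlt ρ hρU rfl
      exact ⟨τ, h1, ple_trans h2 hρle, h3⟩

/-- The antichain of minimal elements of `C \ D`. -/
def minAC (C D : Set Permu) : Set Permu :=
  {σ | σ ∈ C \ D ∧ ∀ ρ ∈ C \ D, PLe ρ σ → ρ = σ}

end Aux

/-- A well quasi-ordered permutation class contains only countably many
subclasses. -/
theorem wqo_countably_many_subclasses
    (C : Set Permu) (hC : IsPermClass C) (hwqo : Wqo C) :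
    Set.Countable {D : Set Permu | IsPermClass D ∧ D ⊆ C} := by
  have hrec : ∀ D ∈ {D : Set Permu | IsPermClass D ∧ D ⊆ C},
      D = {σ | σ ∈ C ∧ ∀ τ ∈ minAC C D, ¬ PLe τ σ} := by
    rintro D ⟨hDclass, hDsub⟩
    ext σ
    constructor
    · intro hσ
      refine ⟨hDsub hσ, ?_⟩
      intro τ hτ hle
      exact hτ.1.2 (hDclass τ σ hle hσ)
    · rintro ⟨hσC, hτ⟩
      by_contra hσD
      obtain ⟨τ, hτU, hle, hminτ⟩ := exists_min (C \ D) σ ⟨hσC, hσD⟩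
      exact hτ τ ⟨hτU, hminτ⟩ hle
  have hfin : ∀ D : Set Permu, (minAC C D).Finite := by
    intro D
    by_contra hinf
    rw [← Set.not_infinite, not_not] at hinf
    have e := hinf.natEmbedding
    apply hwqo
    refine ⟨fun n => (e n : Permu), fun n => (e n).2.1.1, ?_⟩
    intro i j hij hle
    have hne : ((e i : Permu)) ≠ (e j : Permu) :=
      fun h => hij (e.injective (Subtype.ext h))
    exact hne ((e j).2.2 _ (e i).2.1 hle)
  have hinj : Set.InjOn (minAC C) {D : Set Permu | IsPermClass D ∧ D ⊆ C} := by
    intro D₁ h₁ D₂ h₂ hA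
    rw [hrec D₁ h₁, hrec D₂ h₂, hA]
  have hcnt : {t : Set Permu | t.Finite}.Countable := Set.Countable.setOf_finite
  have hcc : Countable {t : Set Permu | t.Finite} := hcnt.to_subtype
  rw [← Set.countable_coe_iff]
  exact Function.Injective.countable
    (f := fun D : {D : Set Permu | IsPermClass D ∧ D ⊆ C} =>
      (⟨minAC C D.1, hfin D.1⟩ : {t : Set Permu | t.Finite}))
    (fun D₁ D₂ h => Subtype.ext (hinj D₁.2 D₂.2 (congrArg Subtype.val h)))
end

section
/- The growth rate of every subword-closed language exists and is integral: if Σ is a finite alphabet and L ⊆ Σ* is a subword-closed language, then there is a natural number d such that lim_{n→∞} |L_n|^{1/n} exists and equals d. -/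
/-!
Let `d` be the largest size of an alphabet `B` with `B* ⊆ L`; then `Bⁿ ⊆ Lₙ`, so `dⁿ ≤ |Lₙ|`.
For every set `C` of more than `d` letters pick a word `u_C ∈ C* \ L`; since `L` is
subword-closed, no word of `L` contains any `u_C` as a subword. Cut `w ∈ L` greedily into factors
using at most `d` letters each. A factor together with the next letter uses more than `d` letters,
so it supplies the first letter of some `u_C`, and the rest of `w` must then avoid the tail of
`u_C`. Hence `w` has at most `M = ∑ |u_C|` cuts, and counting such words gives
`|Lₙ| ≤ c (n + 1)ᴹ dⁿ`. The `n`-th roots of both bounds tend to `d`.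
-/

open Filter Finset Topology
open scoped List

namespace SubwordClosed

variable {A : Type*}

theorem cons_sublist_append_cons {x a : A} {v t r : List A} (hx : x ∈ v ++ [a]) (ht : t <+ r) :
    x :: t <+ v ++ a :: r := by
  simpa using (List.singleton_sublist.2 hx).append ht

variable [DecidableEq A]

def wordsOver (B : Finset A) : ℕ → Finset (List A)
  | 0 => {[]}
  | n + 1 => (B ×ˢ wordsOver B n).image fun p => p.1 :: p.2

theorem mem_wordsOver {B : Finset A} {n : ℕ} {w : List A} :
    w ∈ wordsOver B n ↔ w.length = n ∧ ∀ a ∈ w, a ∈ B := by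
  induction n generalizing w with
  | zero => simp +contextual [wordsOver, List.length_eq_zero_iff]
  | succ n ih => cases w <;> simp [wordsOver, ih, and_left_comm]

theorem card_wordsOver (B : Finset A) (n : ℕ) : #(wordsOver B n) = #B ^ n := by
  induction n with
  | zero => rfl
  | succ n ih =>
    rw [wordsOver, card_image_of_injective _ fun p q h => Prod.ext (List.cons.inj h).1
      (List.cons.inj h).2, card_product, ih, pow_succ']

/-- `Splits d k w` says that `w = v₀ a₁ v₁ ⋯ aⱼ vⱼ` with `j ≤ k`, where each factor `vᵢ` uses at
most `d` distinct letters. -/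
inductive Splits (d : ℕ) : ℕ → List A → Prop
  | few {k : ℕ} {w : List A} : #w.toFinset ≤ d → Splits d k w
  | cons {k : ℕ} {v r : List A} (a : A) :
      #v.toFinset ≤ d → Splits d k r → Splits d (k + 1) (v ++ a :: r)

theorem Splits.length_le_of_zero {k : ℕ} {w : List A} (h : Splits 0 k w) : w.length ≤ k := by
  induction h with
  | few hw => simp_all
  | cons a hv _ ih => simp_all

theorem exists_append_cons_of_lt_card_toFinset {d : ℕ} {w : List A} (hw : d < #w.toFinset) :
    ∃ v a r, w = v ++ a :: r ∧ #v.toFinset ≤ d ∧ d < #(v ++ [a]).toFinset := by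
  induction w using List.reverseRecOn with
  | nil => simp at hw
  | append_singleton w b ih =>
    by_cases hw' : d < #w.toFinset
    · obtain ⟨v, a, r, rfl, hv, hva⟩ := ih hw'
      exact ⟨v, a, r ++ [b], by simp, hv, hva⟩
    · exact ⟨w, b, [], by simp, not_lt.1 hw', hw⟩

theorem splits_of_forall_not_sublist {ι : Type*} [Fintype ι] [DecidableEq ι] {d : ℕ}
    (u : ι → List A) (hu : ∀ C : Finset A, d < #C → ∃ i, ∀ a ∈ u i, a ∈ C)
    {w : List A} (hw : ∀ i, ¬ u i <+ w) : Splits d (∑ i, (u i).length) w := by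
  by_cases hfew : #w.toFinset ≤ d
  · exact .few hfew
  obtain ⟨v, a, r, rfl, hv, hva⟩ := exists_append_cons_of_lt_card_toFinset (not_le.1 hfew)
  obtain ⟨i, hi⟩ := hu _ hva
  obtain ⟨x, t, hxt⟩ : ∃ x t, u i = x :: t := by
    cases h : u i with
    | nil => exact absurd (h ▸ List.nil_sublist _) (hw i)
    | cons x t => exact ⟨x, t, rfl⟩
  have hr : r <+ v ++ a :: r := List.sublist_append_of_sublist_right (List.sublist_cons_self a r)
  let u' := Function.update u i t
  have hu' : ∀ C : Finset A, d < #C → ∃ j, ∀ b ∈ u' j, b ∈ C := by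
    intro C hC
    obtain ⟨j, hj⟩ := hu C hC
    refine ⟨j, fun b hb => hj b ?_⟩
    by_cases hji : j = i
    · subst hji
      rw [hxt]
      exact List.mem_cons_of_mem x (by simpa [u'] using hb)
    · simpa [u', hji] using hb
  have hru' : ∀ j, ¬ u' j <+ r := by
    intro j hj
    by_cases hji : j = i
    · subst hji
      refine hw j (hxt ▸ cons_sublist_append_cons ?_ (by simpa [u'] using hj))
      simpa [or_comm] using hi x (by simp [hxt])
    · exact hw j ((by simpa [u', hji] using hj : u j <+ r).trans hr)
  have hsum : ∑ j, (u j).length = ∑ j, (u' j).length + 1 := by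
    have hlen : (fun j => (u' j).length) = Function.update (fun j => (u j).length) i t.length :=
      funext fun j => Function.apply_update (fun _ => List.length) u i t j
    rw [hlen, sum_update_of_mem (mem_univ i), sdiff_singleton_eq_erase,
      ← add_sum_erase _ _ (mem_univ i), hxt, List.length_cons]
    ring
  rw [hsum]
  exact .cons a hv (splits_of_forall_not_sublist u' hu' hru')
termination_by w.length
decreasing_by subst_vars; simp only [List.length_append, List.length_cons]; omega

section Counting

variable [Fintype A]

theorem card_filter_card_toFinset_le (d n : ℕ) :
    #{w ∈ wordsOver (univ : Finset A) n | #w.toFinset ≤ d} ≤ 2 ^ Fintype.card A * d ^ n := by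
  calc #{w ∈ wordsOver (univ : Finset A) n | #w.toFinset ≤ d}
      ≤ #(({B : Finset A | #B ≤ d} : Finset (Finset A)).biUnion (wordsOver · n)) := by
        refine card_le_card fun w hw => ?_
        simp only [mem_filter, mem_wordsOver, mem_biUnion, mem_univ, true_and] at hw ⊢
        exact ⟨w.toFinset, hw.2, hw.1.1, fun a => List.mem_toFinset.2⟩
    _ ≤ ∑ B ∈ {B : Finset A | #B ≤ d}, #(wordsOver B n) := card_biUnion_le
    _ ≤ ∑ _B : Finset A, d ^ n := by
        refine (sum_le_sum fun B hB => ?_).trans (sum_le_sum_of_subset (subset_univ _))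
        rw [card_wordsOver]
        exact Nat.pow_le_pow_left (mem_filter.1 hB).2 n
    _ = 2 ^ Fintype.card A * d ^ n := by simp [Fintype.card_finset]

open scoped Classical in
theorem card_filter_splits_succ_le (d k n : ℕ) :
    #{w ∈ wordsOver (univ : Finset A) n | Splits d (k + 1) w} ≤
      #{w ∈ wordsOver (univ : Finset A) n | #w.toFinset ≤ d} +
      ∑ ℓ ∈ range n, #{v ∈ wordsOver (univ : Finset A) ℓ | #v.toFinset ≤ d} *
        (Fintype.card A * #{r ∈ wordsOver (univ : Finset A) (n - ℓ - 1) | Splits d k r}) := by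
  let pieces (ℓ : ℕ) : Finset (List A) :=
    ({v ∈ wordsOver (univ : Finset A) ℓ | #v.toFinset ≤ d} ×ˢ (univ ×ˢ
      {r ∈ wordsOver (univ : Finset A) (n - ℓ - 1) | Splits d k r})).image
        fun p => p.1 ++ p.2.1 :: p.2.2
  have hsub : {w ∈ wordsOver (univ : Finset A) n | Splits d (k + 1) w} ⊆
      {w ∈ wordsOver (univ : Finset A) n | #w.toFinset ≤ d} ∪ (range n).biUnion pieces := by
    intro w hw
    simp only [mem_filter, mem_wordsOver, mem_univ, implies_true, and_true] at hw
    obtain ⟨rfl, hw⟩ := hw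
    cases hw with
    | few hfew => simp [mem_wordsOver, hfew]
    | @cons _ v r a hv hr =>
      refine mem_union_right _ (mem_biUnion.2 ⟨v.length, ?_, mem_image.2 ⟨(v, a, r), ?_, rfl⟩⟩)
      · simp
      · simp [mem_wordsOver, hv, hr]
  refine (card_le_card hsub).trans ((card_union_le _ _).trans (add_le_add_right
    (card_biUnion_le.trans (sum_le_sum fun ℓ _ => card_image_le.trans ?_)) _))
  rw [card_product, card_product, card_univ]

open scoped Classical in
theorem card_filter_splits_le {d : ℕ} (hd : 0 < d) (k n : ℕ) :
    #{w ∈ wordsOver (univ : Finset A) n | Splits d k w} ≤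
      (2 ^ Fintype.card A * (Fintype.card A + 1)) ^ (k + 1) * (n + 1) ^ k * d ^ n := by
  induction k generalizing n with
  | zero =>
    refine (card_le_card fun w hw => ?_).trans ((card_filter_card_toFinset_le d n).trans ?_)
    · obtain ⟨hw, hs⟩ := mem_filter.1 hw
      cases hs with
      | few h => exact mem_filter.2 ⟨hw, h⟩
    · gcongr
      simp
  | succ k ih =>
    set s := Fintype.card A
    set c := 2 ^ s * (s + 1)
    have hterm : ∀ ℓ ∈ range n, #{v ∈ wordsOver (univ : Finset A) ℓ | #v.toFinset ≤ d} *
        (s * #{r ∈ wordsOver (univ : Finset A) (n - ℓ - 1) | Splits d k r}) ≤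
          2 ^ s * s * (c ^ (k + 1) * (n + 1) ^ k) * d ^ n := by
      intro ℓ hℓ
      have hℓ : ℓ < n := mem_range.1 hℓ
      calc _ ≤ 2 ^ s * d ^ ℓ * (s * (c ^ (k + 1) * (n - ℓ - 1 + 1) ^ k * d ^ (n - ℓ - 1))) := by
            gcongr; exacts [card_filter_card_toFinset_le d ℓ, ih _]
        _ = 2 ^ s * s * (c ^ (k + 1) * (n - ℓ - 1 + 1) ^ k) * d ^ (ℓ + (n - ℓ - 1)) := by ring
        _ ≤ _ := by gcongr <;> omega
    have hsum : ∀ X : ℕ, 1 ≤ X →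
        2 ^ s * d ^ n + n * (2 ^ s * s * X * d ^ n) ≤ 2 ^ s * (s + 1) * X * (n + 1) * d ^ n := by
      intro X hX
      have : 1 + n * s * X ≤ (s + 1) * X * (n + 1) := by nlinarith
      calc _ = 2 ^ s * d ^ n * (1 + n * s * X) := by ring
        _ ≤ 2 ^ s * d ^ n * ((s + 1) * X * (n + 1)) := by gcongr
        _ = _ := by ring
    calc _ ≤ _ := card_filter_splits_succ_le d k n
      _ ≤ 2 ^ s * d ^ n + n * (2 ^ s * s * (c ^ (k + 1) * (n + 1) ^ k) * d ^ n) := by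
        gcongr
        · exact card_filter_card_toFinset_le d n
        · simpa using sum_le_sum hterm
      _ ≤ _ := hsum _ (Nat.one_le_iff_ne_zero.2 (by positivity))
      _ = _ := by ring

open scoped Classical in
theorem eventually_card_filter_splits_le (d k : ℕ) : ∀ᶠ n in atTop,
    #{w ∈ wordsOver (univ : Finset A) n | Splits d k w} ≤
      (2 ^ Fintype.card A * (Fintype.card A + 1)) ^ (k + 1) * (n + 1) ^ k * d ^ n := by
  rcases d.eq_zero_or_pos with rfl | hd
  · filter_upwards [eventually_gt_atTop k] with n hn
    refine (card_eq_zero.2 (filter_eq_empty_iff.2 fun w hw hs => ?_)).trans_le (Nat.zero_le _)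
    exact hn.not_ge ((mem_wordsOver.1 hw).1 ▸ hs.length_le_of_zero)
  · exact .of_forall (card_filter_splits_le hd k)

theorem ncard_le_card_filter_wordsOver {L : Set (List A)} {p : List A → Prop} [DecidablePred p]
    (hp : ∀ w ∈ L, p w) (n : ℕ) :
    {w ∈ L | w.length = n}.ncard ≤ #{w ∈ wordsOver (univ : Finset A) n | p w} := by
  rw [← Set.ncard_coe_finset]
  exact Set.ncard_le_ncard (fun w ⟨hw, hn⟩ => by simp [mem_wordsOver, hn, hp w hw])
    (finite_toSet _)

theorem pow_card_le_ncard {L : Set (List A)} {B : Finset A}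
    (hB : ∀ w : List A, (∀ a ∈ w, a ∈ B) → w ∈ L) (n : ℕ) :
    #B ^ n ≤ {w ∈ L | w.length = n}.ncard := by
  rw [← card_wordsOver, ← Set.ncard_coe_finset]
  exact Set.ncard_le_ncard (fun w hw => ⟨hB w (mem_wordsOver.1 hw).2, (mem_wordsOver.1 hw).1⟩)
    ((List.finite_length_eq A n).subset fun w hw => hw.2)

theorem exists_forall_splits {L : Set (List A)} (hL : ∀ w ∈ L, ∀ v : List A, v <+ w → v ∈ L)
    {d : ℕ} (hd : ∀ C : Finset A, d < #C → ∃ u : List A, (∀ a ∈ u, a ∈ C) ∧ u ∉ L) :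
    ∃ M, ∀ w ∈ L, Splits d M w := by
  classical
  choose u hu using hd
  let U (C : {C : Finset A // d < #C}) : List A := u C C.2
  refine ⟨∑ C, (U C).length, fun w hw => splits_of_forall_not_sublist U
    (fun C hC => ⟨⟨C, hC⟩, (hu C hC).1⟩) fun C hC => (hu C C.2).2 (hL w hw _ hC)⟩

end Counting

theorem tendsto_const_mul_add_one_pow_rpow_inv {c : ℝ} (hc : 0 < c) (M : ℕ) :
    Tendsto (fun n : ℕ => (c * ((n : ℝ) + 1) ^ M) ^ (n : ℝ)⁻¹) atTop (𝓝 1) := by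
  have hconst : Tendsto (fun n : ℕ => c ^ (n : ℝ)⁻¹) atTop (𝓝 1) := by
    simpa using tendsto_const_nhds.rpow tendsto_inv_atTop_nhds_zero_nat (Or.inl hc.ne')
  have hpoly : Tendsto (fun n : ℕ => ((n : ℝ) + 1) ^ ((M : ℝ) / (1 * ((n : ℝ) + 1) + -1)))
      atTop (𝓝 1) :=
    (tendsto_rpow_div_mul_add M 1 (-1) one_ne_zero.symm).comp
      (tendsto_atTop_add_const_right _ 1 tendsto_natCast_atTop_atTop)
  refine (mul_one (1 : ℝ) ▸ hconst.mul hpoly).congr fun n => ?_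
  rw [Real.mul_rpow hc.le (by positivity), ← Real.rpow_natCast_mul (by positivity)]
  ring_nf

theorem tendsto_rpow_inv_of_pow_le_of_le_mul_pow {f : ℕ → ℝ} {d c : ℝ} {M : ℕ} (hd : 0 ≤ d)
    (hc : 0 < c) (hlow : ∀ᶠ n in atTop, d ^ n ≤ f n)
    (hup : ∀ᶠ n in atTop, f n ≤ c * ((n : ℝ) + 1) ^ M * d ^ n) :
    Tendsto (fun n : ℕ => f n ^ (n : ℝ)⁻¹) atTop (𝓝 d) := by
  refine tendsto_of_tendsto_of_tendsto_of_le_of_le' tendsto_const_nhds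
    (by simpa using (tendsto_const_mul_add_one_pow_rpow_inv hc M).mul_const d) ?_ ?_
  · filter_upwards [hlow, eventually_ne_atTop 0] with n hlow hn
    calc d = (d ^ n) ^ (n : ℝ)⁻¹ := (Real.pow_rpow_inv_natCast hd hn).symm
      _ ≤ f n ^ (n : ℝ)⁻¹ := Real.rpow_le_rpow (by positivity) hlow (by positivity)
  · filter_upwards [hlow, hup, eventually_ne_atTop 0] with n hlow hup hn
    calc f n ^ (n : ℝ)⁻¹ ≤ (c * ((n : ℝ) + 1) ^ M * d ^ n) ^ (n : ℝ)⁻¹ :=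
          Real.rpow_le_rpow (hlow.trans' (by positivity)) hup (by positivity)
      _ = (c * ((n : ℝ) + 1) ^ M) ^ (n : ℝ)⁻¹ * d := by
          rw [Real.mul_rpow (by positivity) (by positivity), Real.pow_rpow_inv_natCast hd hn]

end SubwordClosed

open SubwordClosed

/-- The growth rate of every subword-closed language over a finite
alphabet exists and is a natural number. -/
theorem subword_closed_growth_rate_integral
    {A : Type} [Fintype A] (L : Set (List A))
    (hL : ∀ w ∈ L, ∀ v : List A, v.Sublist w → v ∈ L) :
    ∃ d : ℕ, Tendsto
      (fun n : ℕ => (Set.ncard {w ∈ L | w.length = n} : ℝ) ^ ((n : ℝ)⁻¹))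
      atTop (nhds (d : ℝ)) := by
  classical
  let full : Finset (Finset A) := {B | ∀ w : List A, (∀ a ∈ w, a ∈ B) → w ∈ L}
  let d := full.sup card
  have hmax : ∀ C : Finset A, d < #C → ∃ u : List A, (∀ a ∈ u, a ∈ C) ∧ u ∉ L := by
    intro C hC
    by_contra! h
    exact hC.not_ge (le_sup (f := card) (mem_filter.2 ⟨mem_univ C, h⟩))
  obtain ⟨M, hM⟩ := exists_forall_splits hL hmax
  refine ⟨d, tendsto_rpow_inv_of_pow_le_of_le_mul_pow (Nat.cast_nonneg d) (M := M)
    (c := ((2 ^ Fintype.card A * (Fintype.card A + 1)) ^ (M + 1) : ℕ)) (by positivity) ?_ ?_⟩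
  · rcases full.eq_empty_or_nonempty with hfull | hfull
    · filter_upwards [eventually_ne_atTop 0] with n hn
      simp [d, hfull, zero_pow hn]
    · obtain ⟨B, hB, hBd⟩ := exists_mem_eq_sup full hfull card
      exact .of_forall fun n => by exact_mod_cast hBd ▸ pow_card_le_ncard (mem_filter.1 hB).2 n
  · filter_upwards [eventually_card_filter_splits_le (A := A) d M] with n hn
    exact_mod_cast (ncard_le_card_filter_wordsOver hM n).trans hn
end

section
/- Every subword-closed language over a finite alphabet is regular: if Σ is a finite alphabet and L ⊆ Σ* is a subword-closed language, then L is a regular language (accepted by a deterministic finite automaton with finitely many states). -/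
/-!
By the Myhill–Nerode theorem it suffices that `L` has finitely many left quotients
`x⁻¹L = {y | x ++ y ∈ L}`. For subword-closed `L` these quotients are again subword-closed, and
`u <+ w` implies `w⁻¹L ⊆ u⁻¹L`. By Higman's lemma the sublist order is a well-quasi-order, so
infinitely many distinct quotients would contain a strictly decreasing sequence of subword-closed
languages; but a well-quasi-order admits no strictly decreasing sequence of down-closed sets.
-/

instance List.isPreorder_sublist {α : Type*} : IsPreorder (List α) List.Sublist where
  refl := List.Sublist.refl
  trans _ _ _ := List.Sublist.trans

theorem List.wellQuasiOrdered_sublist {α : Type*} [Finite α] :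
    WellQuasiOrdered (@List.Sublist α) := by
  intro f
  have hpwo := (Set.finite_univ (α := α)).partiallyWellOrderedOn (r := (· = ·))
    |>.partiallyWellOrderedOn_sublistForall₂ (· = ·)
  obtain ⟨m, n, hmn, hsub⟩ := hpwo.exists_lt (f := f) fun _ x _ => Set.mem_univ x
  obtain ⟨l, hl, hln⟩ := List.sublistForall₂_iff.1 hsub
  rw [List.forall₂_eq_eq_eq] at hl
  exact ⟨m, n, hmn, hl ▸ hln⟩

section WellQuasiOrdered

variable {α : Type*} {r : α → α → Prop}

theorem WellQuasiOrdered.not_strictAnti (hr : WellQuasiOrdered r) {D : ℕ → Set α}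
    (hD : ∀ n, ∀ x ∈ D n, ∀ y, r y x → y ∈ D n) : ¬ StrictAnti D := by
  intro hanti
  have hgap n : ∃ x, x ∈ D n ∧ x ∉ D (n + 1) :=
    Set.not_subset.1 (hanti (Nat.lt_succ_self n)).not_ge
  choose x hxD hxD' using hgap
  obtain ⟨m, n, hmn, hr⟩ := hr x
  exact hxD' m (hD (m + 1) (x n) (hanti.antitone hmn (hxD n)) (x m) hr)

theorem WellQuasiOrdered.finite_range_of_antitone [IsPreorder α r] (hr : WellQuasiOrdered r)
    {β : Type*} [PartialOrder β] {f : α → β} (hf : ∀ a b, r a b → f b ≤ f a)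
    (hdesc : ∀ g : ℕ → α, ¬ StrictAnti (f ∘ g)) : (Set.range f).Finite := by
  by_contra hinf
  let e := Set.Infinite.natEmbedding _ hinf
  choose w hw using fun n => (e n).2
  have hinj : Function.Injective (f ∘ w) := fun m n h =>
    e.injective (Subtype.ext (by simpa only [Function.comp, hw] using h))
  obtain ⟨g, hg⟩ := hr.exists_monotone_subseq w
  have hanti : Antitone (f ∘ w ∘ g) := fun m n hmn => hf _ _ (hg m n hmn)
  exact hdesc (w ∘ g) (hanti.strictAnti_of_injective (hinj.comp g.injective))

end WellQuasiOrdered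

namespace Language

variable {A : Type*} {L : Language A}

theorem leftQuotient_le_of_sublist (hL : ∀ w ∈ L, ∀ v : List A, v.Sublist w → v ∈ L)
    {u w : List A} (h : u.Sublist w) :
    L.leftQuotient w ≤ L.leftQuotient u :=
  fun v hv => hL (w ++ v) hv (u ++ v) (h.append_right v)

theorem mem_leftQuotient_of_sublist (hL : ∀ w ∈ L, ∀ v : List A, v.Sublist w → v ∈ L)
    (x : List A) :
    ∀ y ∈ L.leftQuotient x, ∀ v : List A, v.Sublist y → v ∈ L.leftQuotient x :=
  fun y hy v hv => hL (x ++ y) hy (x ++ v) (hv.append_left x)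

end Language

/-- Every subword-closed language over a finite alphabet is regular. -/
theorem subword_closed_is_regular
    {A : Type} [Fintype A] (L : Language A)
    (hL : ∀ w ∈ L, ∀ v : List A, v.Sublist w → v ∈ L) :
    L.IsRegular := by
  refine Language.IsRegular.of_finite_range_leftQuotient ?_
  refine List.wellQuasiOrdered_sublist.finite_range_of_antitone
    (fun u w h => Language.leftQuotient_le_of_sublist hL h) fun g => ?_
  exact List.wellQuasiOrdered_sublist.not_strictAnti
    fun n => Language.mem_leftQuotient_of_sublist hL (g n)
end

section
/- A permutation class C is well quasi-ordered if and only if the set of its members that are both sum indecomposable and skew indecomposable is well quasi-ordered. -/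
open Filter

/-!
Nash-Williams' minimal bad sequence argument. Take a bad sequence `f` in `C` that is minimal
for the lengths of its terms. The proper patterns of its terms form a well quasi-ordered set `T`:
a bad sequence there could be spliced into `f` to produce a smaller bad sequence. A term of `f`
is either sum and skew indecomposable, or it is `u ⊕ v` or `u ⊖ v` with `u, v ∈ T`. Since `⊕` and
`⊖` are monotone for containment, `T ⊕ T` and `T ⊖ T` are images of the well quasi-ordered set
`T × T`, so `f` lives in a union of three well quasi-ordered sets and cannot be bad.
-/

namespace PLe

lemma refl (π : Permu) : PLe π π :=
  ⟨id, strictMono_id, fun _ _ => Iff.rfl⟩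

lemma trans {σ τ π : Permu} (h₁ : PLe σ τ) (h₂ : PLe τ π) : PLe σ π := by
  obtain ⟨f, hf, hfσ⟩ := h₁
  obtain ⟨g, hg, hgτ⟩ := h₂
  exact ⟨g ∘ f, hg.comp hf, fun i j => (hfσ i j).trans (hgτ (f i) (f j))⟩

instance : IsPreorder Permu PLe where
  refl := refl
  trans _ _ _ := trans

lemma length_le {σ π : Permu} (h : PLe σ π) : σ.1 ≤ π.1 := by
  obtain ⟨f, hf, -⟩ := h
  simpa using Fintype.card_le_of_injective f hf.injective

lemma eq_of_length_eq {σ π : Permu} (h : PLe σ π) (hlen : σ.1 = π.1) : σ = π := by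
  obtain ⟨n, s⟩ := σ
  obtain ⟨m, p⟩ := π
  obtain rfl : n = m := hlen
  obtain ⟨f, hf, hsp⟩ := h
  obtain rfl : f = id := hf.eq_id
  have hps : p * s⁻¹ = 1 := by
    refine Equiv.ext (congrFun (StrictMono.eq_id fun a b hab => ?_))
    simpa using (hsp (s⁻¹ a) (s⁻¹ b)).1 (by simpa using hab)
  rw [mul_inv_eq_one.1 hps]

end PLe

lemma wqo_iff_partiallyWellOrderedOn (S : Set Permu) : Wqo S ↔ S.PartiallyWellOrderedOn PLe := by
  rw [Set.partiallyWellOrderedOn_iff_exists_lt]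
  constructor
  · intro hS f hf
    by_contra! hbad
    obtain ⟨g, hg⟩ := (Set.partiallyWellOrderedOn_of_wellQuasiOrdered
      (wellQuasiOrdered_le (α := ℕ)) Set.univ).exists_monotone_subseq (f := fun n => (f n).1)
      (fun _ => trivial)
    -- containment is antisymmetric, so along nondecreasing lengths no pair is descending either
    refine hS ⟨f ∘ g, fun n => hf (g n), fun i j hij hle => ?_⟩
    rcases hij.lt_or_gt with hij | hij
    · exact hbad _ _ (g.strictMono hij) hle
    · have heq : f (g i) = f (g j) :=
        hle.eq_of_length_eq (hle.length_le.antisymm (hg j i hij.le))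
      exact hbad _ _ (g.strictMono hij) (by rw [heq]; exact .refl _)
  · rintro hS ⟨f, hf, hanti⟩
    obtain ⟨m, n, hmn, hle⟩ := hS f hf
    exact hanti m n hmn.ne hle

section SumSkewValues

variable (u v : Permu)

@[simp] lemma psum_castAdd (i : Fin u.1) : ((psum u v).2 (Fin.castAdd v.1 i) : ℕ) = u.2 i := by
  show (permSum u.2 v.2 (Fin.castAdd v.1 i) : ℕ) = _
  simp [permSum]

@[simp] lemma psum_natAdd (j : Fin v.1) :
    ((psum u v).2 (Fin.natAdd u.1 j) : ℕ) = u.1 + v.2 j := by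
  show (permSum u.2 v.2 (Fin.natAdd u.1 j) : ℕ) = _
  simp [permSum]

@[simp] lemma pskew_castAdd (i : Fin u.1) :
    ((pskew u v).2 (Fin.castAdd v.1 i) : ℕ) = v.1 + u.2 i := by
  show (permSkew u.2 v.2 (Fin.castAdd v.1 i) : ℕ) = _
  simp [permSkew, add_comm]

@[simp] lemma pskew_natAdd (j : Fin v.1) : ((pskew u v).2 (Fin.natAdd u.1 j) : ℕ) = v.2 j := by
  show (permSkew u.2 v.2 (Fin.natAdd u.1 j) : ℕ) = _
  simp [permSkew]

end SumSkewValues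

def Fin.blockMap {m n m' n' : ℕ} (f : Fin m → Fin m') (g : Fin n → Fin n') :
    Fin (m + n) → Fin (m' + n') :=
  Fin.addCases (Fin.castAdd n' ∘ f) (Fin.natAdd m' ∘ g)

lemma StrictMono.blockMap {m n m' n' : ℕ} {f : Fin m → Fin m'} {g : Fin n → Fin n'}
    (hf : StrictMono f) (hg : StrictMono g) : StrictMono (Fin.blockMap f g) := by
  intro i j hij
  induction i using Fin.addCases <;> induction j using Fin.addCases <;>
    simp only [Fin.blockMap, Fin.addCases_left, Fin.addCases_right, Function.comp_apply,
      Fin.lt_def, Fin.val_castAdd, Fin.val_natAdd] at hij ⊢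
  case left.left i j => exact hf hij
  case right.right i j => exact Nat.add_lt_add_left (hg (Nat.lt_of_add_lt_add_left hij)) m'
  all_goals omega

lemma pLe_psum_left (u v : Permu) : PLe u (psum u v) :=
  ⟨Fin.castAdd v.1, Fin.strictMono_castAdd _, fun i j => by
    simp only [Fin.lt_def, psum_castAdd]⟩

lemma pLe_psum_right (u v : Permu) : PLe v (psum u v) :=
  ⟨Fin.natAdd u.1, Fin.strictMono_natAdd _, fun i j => by
    simp only [Fin.lt_def, psum_natAdd, add_lt_add_iff_left]⟩

lemma pLe_pskew_left (u v : Permu) : PLe u (pskew u v) :=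
  ⟨Fin.castAdd v.1, Fin.strictMono_castAdd _, fun i j => by
    simp only [Fin.lt_def, pskew_castAdd, add_lt_add_iff_left]⟩

lemma pLe_pskew_right (u v : Permu) : PLe v (pskew u v) :=
  ⟨Fin.natAdd u.1, Fin.strictMono_natAdd _, fun i j => by
    simp only [Fin.lt_def, pskew_natAdd]⟩

lemma psum_mono {u v u' v' : Permu} (hu : PLe u u') (hv : PLe v v') :
    PLe (psum u v) (psum u' v') := by
  obtain ⟨f, hf, hfu⟩ := hu
  obtain ⟨g, hg, hgv⟩ := hv
  refine ⟨Fin.blockMap f g, hf.blockMap hg, fun i j => ?_⟩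
  simp only [Fin.lt_def] at hfu hgv
  induction i using Fin.addCases <;> induction j using Fin.addCases <;>
    simp only [Fin.blockMap, Fin.addCases_left, Fin.addCases_right, Function.comp_apply,
      Fin.lt_def, psum_castAdd, psum_natAdd, add_lt_add_iff_left, hfu, hgv] <;> omega

lemma pskew_mono {u v u' v' : Permu} (hu : PLe u u') (hv : PLe v v') :
    PLe (pskew u v) (pskew u' v') := by
  obtain ⟨f, hf, hfu⟩ := hu
  obtain ⟨g, hg, hgv⟩ := hv
  refine ⟨Fin.blockMap f g, hf.blockMap hg, fun i j => ?_⟩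
  simp only [Fin.lt_def] at hfu hgv
  induction i using Fin.addCases <;> induction j using Fin.addCases <;>
    simp only [Fin.blockMap, Fin.addCases_left, Fin.addCases_right, Function.comp_apply,
      Fin.lt_def, pskew_castAdd, pskew_natAdd, add_lt_add_iff_left, hfu, hgv] <;> omega

namespace Set.PartiallyWellOrderedOn

variable {α : Type*} {r : α → α → Prop}

lemma image2 [IsPreorder α r] {s : Set α} (hs : s.PartiallyWellOrderedOn r) {op : α → α → α}
    (hop : ∀ ⦃a b a' b'⦄, r a a' → r b b' → r (op a b) (op a' b')) :
    (Set.image2 op s s).PartiallyWellOrderedOn r := by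
  rw [← Set.image_prod]
  exact (hs.prod hs).image_of_monotone_on fun _ _ _ _ h => hop h.1 h.2

/-- A bad sequence of such elements, spliced into `f` after its first `n` terms, would contradict
the minimality of `f`. -/
lemma of_isMinBadSeq [IsTrans α r] {rk : α → ℕ} {s : Set α} {f : ℕ → α} (hf : IsBadSeq r s f)
    (hmin : ∀ n, IsMinBadSeq r rk s n f) :
    {b ∈ s | ∃ n, r b (f n) ∧ rk b < rk (f n)}.PartiallyWellOrderedOn r := by
  rw [iff_forall_not_isBadSeq]
  rintro b ⟨hbs, hbad⟩
  choose hb n hbn hrk using hbs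
  let k₀ := Function.argmin n
  have hk₀ : ∀ k, n k₀ ≤ n k := fun k => Function.argmin_le n k
  let w : ℕ → α := fun i => if i < n k₀ then f i else b (k₀ + (i - n k₀))
  refine hmin (n k₀) w (fun i hi => (if_pos hi).symm) (by simpa [w] using hrk k₀) ⟨fun i => ?_, ?_⟩
  · by_cases hi : i < n k₀
    · simpa [w, hi] using hf.1 i
    · simpa [w, hi] using hb _
  · intro i j hij
    by_cases hj : j < n k₀
    · simpa [w, hj, hij.trans hj] using hf.2 i j hij
    by_cases hi : i < n k₀
    · simp only [w, if_pos hi, if_neg hj]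
      exact fun hr => hf.2 i _ (hi.trans_le (hk₀ _)) (_root_.trans hr (hbn _))
    · simp only [w, if_neg hi, if_neg hj]
      exact hbad _ _ (by omega)

end Set.PartiallyWellOrderedOn

lemma exists_decomposition_of_not_indec {π : Permu} (hπ : ¬ (SumIndec π ∧ SkewIndec π)) :
    ∃ u v, (π = psum u v ∨ π = pskew u v) ∧ PLe u π ∧ PLe v π ∧ u.1 < π.1 ∧ v.1 < π.1 := by
  rcases not_and_or.1 hπ with h | h
  · obtain ⟨u, v, hu, hv, rfl⟩ := not_not.1 h
    exact ⟨u, v, Or.inl rfl, pLe_psum_left u v, pLe_psum_right u v,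
      Nat.lt_add_of_pos_right hv, Nat.lt_add_of_pos_left hu⟩
  · obtain ⟨u, v, hu, hv, rfl⟩ := not_not.1 h
    exact ⟨u, v, Or.inr rfl, pLe_pskew_left u v, pLe_pskew_right u v,
      Nat.lt_add_of_pos_right hv, Nat.lt_add_of_pos_left hu⟩

/-- A permutation class is well quasi-ordered if and only if its set of
members that are both sum and skew indecomposable is well quasi-ordered. -/
theorem wqo_iff_sum_skew_indecomposables_wqo
    (C : Set Permu) (hC : IsPermClass C) :
    Wqo C ↔ Wqo {π ∈ C | SumIndec π ∧ SkewIndec π} := by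
  simp only [wqo_iff_partiallyWellOrderedOn]
  refine ⟨fun h => h.mono (Set.sep_subset _ _), fun hB => ?_⟩
  rw [Set.PartiallyWellOrderedOn.iff_not_exists_isMinBadSeq (fun π : Permu => π.1)]
  rintro ⟨f, hbad, hmin⟩
  set T := {σ ∈ C | ∃ n, PLe σ (f n) ∧ σ.1 < (f n).1}
  have hT : T.PartiallyWellOrderedOn PLe := .of_isMinBadSeq hbad hmin
  have hcover : ∀ n, f n ∈ {π ∈ C | SumIndec π ∧ SkewIndec π} ∪
      (Set.image2 psum T T ∪ Set.image2 pskew T T) := by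
    intro n
    by_cases hind : SumIndec (f n) ∧ SkewIndec (f n)
    · exact Or.inl ⟨hbad.1 n, hind⟩
    obtain ⟨u, v, hop, hu, hv, hul, hvl⟩ := exists_decomposition_of_not_indec hind
    have huT : u ∈ T := ⟨hC _ _ hu (hbad.1 n), n, hu, hul⟩
    have hvT : v ∈ T := ⟨hC _ _ hv (hbad.1 n), n, hv, hvl⟩
    rcases hop with h | h
    · exact Or.inr (Or.inl ⟨u, huT, v, hvT, h.symm⟩)
    · exact Or.inr (Or.inr ⟨u, huT, v, hvT, h.symm⟩)
  have hpwo := hB.union ((hT.image2 @psum_mono).union (hT.image2 @pskew_mono))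
  obtain ⟨m, n, hmn, hle⟩ := hpwo.exists_lt hcover
  exact hbad.2 m n hmn hle
end

section
/- Let α be a type with a partial order and let C ⊆ α be a lower set. Then C cannot be expressed as the union of two proper lower subsets of itself if and only if C satisfies the joint embedding property: for all σ, τ ∈ C there exists π ∈ C with σ ≤ π and τ ≤ π. -/
/-- A lower set `C` in a partial order cannot be written as the union
of two proper lower subsets if and only if it satisfies the joint embedding property. -/
theorem atomic_iff_joint_embedding
    {α : Type*} [PartialOrder α] (C : Set α) (hC : IsLowerSet C) :
    (¬ ∃ D E : Set α, IsLowerSet D ∧ IsLowerSet E ∧ D ⊂ C ∧ E ⊂ C ∧ C = D ∪ E) ↔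
      ∀ σ ∈ C, ∀ τ ∈ C, ∃ π ∈ C, σ ≤ π ∧ τ ≤ π := by
  constructor
  · intro h σ hσ τ hτ
    by_contra hno
    push_neg at hno
    apply h
    refine ⟨{x ∈ C | ¬ σ ≤ x}, {x ∈ C | ¬ τ ≤ x}, ?_, ?_, ?_, ?_, ?_⟩
    · intro a b hab ⟨hbC, hb⟩
      exact ⟨hC hab hbC, fun h' => hb (h'.trans hab)⟩
    · intro a b hab ⟨hbC, hb⟩
      exact ⟨hC hab hbC, fun h' => hb (h'.trans hab)⟩
    · exact ⟨fun x hx => hx.1, fun hsub => (hsub hσ).2 le_rfl⟩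
    · exact ⟨fun x hx => hx.1, fun hsub => (hsub hτ).2 le_rfl⟩
    · ext x
      constructor
      · intro hx
        by_cases h1 : σ ≤ x
        · exact Or.inr ⟨hx, fun h2 => hno x hx h1 h2⟩
        · exact Or.inl ⟨hx, h1⟩
      · rintro (⟨hx, _⟩ | ⟨hx, _⟩) <;> exact hx
  · rintro hjep ⟨D, E, hD, hE, ⟨hDC, hDne⟩, ⟨hEC, hEne⟩, hunion⟩
    obtain ⟨σ, hσC, hσD⟩ : ∃ σ ∈ C, σ ∉ D := by
      by_contra h; push_neg at h; exact hDne h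
    obtain ⟨τ, hτC, hτE⟩ : ∃ τ ∈ C, τ ∉ E := by
      by_contra h; push_neg at h; exact hEne h
    obtain ⟨π, hπC, hσπ, hτπ⟩ := hjep σ hσC τ hτC
    rw [hunion] at hπC
    rcases hπC with h | h
    · exact hσD (hD hσπ h)
    · exact hτE (hE hτπ h)
end
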